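/- Fix an integer p ≥ 2 and f ∈ 𝓕, and let (κ_n) be a positive real sequence diverging to ∞. Then (κ_n φ_f(κ_n))^{(p−1)/2} · (1/f(κ_n)) · ∫_{-1}^{1} (1−s²)^{(p−3)/2} f(κ_n s) ds → 2^{(p−3)/2} Γ((p−1)/2) as n → ∞, where Γ is the Euler Gamma function. -/

import Mathlib

open MeasureTheory Filter Asymptotics Real Set Topology

/-- Logarithmic derivative `φ_f = f'/f`. -/
noncomputable def phiF (f : ℝ → ℝ) (κ : ℝ) : ℝ := deriv f κ / f κ

/-- Membership in the class `𝓕` of angular functions. -/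
structure MemF (f : ℝ → ℝ) : Prop where
  pos : ∀ x, 0 < f x
  monoNonpos : MonotoneOn f (Set.Iic (0:ℝ))
  strictMonoNonneg : StrictMonoOn f (Set.Ici (0:ℝ))
  diff : ∃ M > (0:ℝ), ∀ x ∈ Set.Ioi M, DifferentiableAt ℝ f x
  tendsto_top : Tendsto (fun κ => κ * phiF f κ) atTop atTop
  monoOn : ∃ M' > (0:ℝ), MonotoneOn (fun κ => κ * phiF f κ) (Set.Ioi M')
  littleO : ∀ ξ ζ : ℝ, -1 < ξ → -1 < ζ →
    (fun κ => ∫ s in (-1:ℝ)..1, (1 - s) ^ ξ * (1 + s) ^ ζ *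
        |f (κ * s) / f κ - Real.exp ((s - 1) * (κ * phiF f κ))|)
      =o[atTop] (fun κ => (κ * phiF f κ) ^ (-(ξ + 1)))

/-- The normalizing integral `∫_{-1}^1 (1-s²)^{(p-3)/2} f(κ s) ds`. -/
noncomputable def I0 (p : ℕ) (f : ℝ → ℝ) (κ : ℝ) : ℝ :=
  ∫ s in (-1:ℝ)..1, (1 - s ^ 2) ^ (((p:ℝ) - 3) / 2) * f (κ * s)

/-- The `ℓ`-th moment `e_ℓ(κ)` of the latitude cosine under `Rot_p(θ, κ, f)`. -/
noncomputable def eMom (p : ℕ) (f : ℝ → ℝ) (ℓ : ℕ) (κ : ℝ) : ℝ :=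
  (∫ s in (-1:ℝ)..1, s ^ ℓ * (1 - s ^ 2) ^ (((p:ℝ) - 3) / 2) * f (κ * s)) / I0 p f κ

/-- The variance `ẽ₂(κ) = e₂(κ) - e₁(κ)²`. -/
noncomputable def eTilde2 (p : ℕ) (f : ℝ → ℝ) (κ : ℝ) : ℝ :=
  eMom p f 2 κ - (eMom p f 1 κ) ^ 2

lemma rpow_le_aux {a x : ℝ} (h1 : 1 ≤ x) (h2 : x ≤ 2) : x ^ a ≤ 1 + 2 ^ a := by
  rcases le_or_gt 0 a with ha | ha
  · have : x ^ a ≤ 2 ^ a := Real.rpow_le_rpow (by linarith) h2 ha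
    linarith
  · have : x ^ a ≤ 1 := Real.rpow_le_one_of_one_le_of_nonpos h1 ha.le
    have h2a : (0:ℝ) < 2 ^ a := Real.rpow_pos_of_pos two_pos a
    linarith

lemma beta_intervalIntegrable {a b : ℝ} (ha : -1 < a) (hb : -1 < b) :
    IntervalIntegrable (fun s => (1 - s) ^ a * (1 + s) ^ b) volume (-1) 1 := by
  apply IntervalIntegrable.trans (b := 0)
  · have h1 : IntervalIntegrable (fun s : ℝ => (1 + s) ^ b) volume (-1) 0 := by
      have := (intervalIntegral.intervalIntegrable_rpow' hb (a := 0) (b := 1)).comp_add_left 1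
      simpa using this
    have h2 : ContinuousOn (fun s : ℝ => (1 - s) ^ a) (Set.uIcc (-1) 0) := by
      apply ContinuousOn.rpow_const (by fun_prop)
      intro x hx
      rw [Set.uIcc_of_le (by norm_num)] at hx
      exact Or.inl (by simp only [mem_Icc] at hx; intro h; linarith)
    simpa [mul_comm] using h1.mul_continuousOn h2
  · have h1 : IntervalIntegrable (fun s : ℝ => (1 - s) ^ a) volume 0 1 := by
      have := (intervalIntegral.intervalIntegrable_rpow' ha (a := 0) (b := 1)).comp_sub_left 1
      simpa using this.symm
    have h2 : ContinuousOn (fun s : ℝ => (1 + s) ^ b) (Set.uIcc 0 1) := by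
      apply ContinuousOn.rpow_const (by fun_prop)
      intro x hx
      rw [Set.uIcc_of_le (by norm_num)] at hx
      exact Or.inl (by simp only [mem_Icc] at hx; intro h; linarith)
    exact h1.mul_continuousOn h2

/-- Part 1: `∫_0^t u^a (2-u/t)^a e^{-u} du → 2^a Γ(a+1)`. -/
lemma tendsto_P1 {a : ℝ} (ha : -1 < a) :
    Tendsto (fun t : ℝ => ∫ u in (0:ℝ)..t, u ^ a * (2 - u / t) ^ a * Real.exp (-u)) atTop
      (𝓝 (2 ^ a * Real.Gamma (a + 1))) := by
  have ha1 : (0:ℝ) < a + 1 := by linarith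
  set ν := volume.restrict (Ioi (0:ℝ)) with hν
  set F : ℝ → ℝ → ℝ := fun t => (Ioc (0:ℝ) t).indicator (fun u => u ^ a * (2 - u / t) ^ a * Real.exp (-u)) with hF
  have hGam : IntegrableOn (fun u : ℝ => Real.exp (-u) * u ^ a) (Ioi 0) := by
    simpa using Real.GammaIntegral_convergent ha1
  have hbound_int : Integrable (fun u : ℝ => (1 + 2 ^ a) * (Real.exp (-u) * u ^ a)) ν :=
    (hGam.const_mul _)
  have key : Tendsto (fun t => ∫ u, F t u ∂ν) atTop
      (𝓝 (∫ u, 2 ^ a * (Real.exp (-u) * u ^ a) ∂ν)) := by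
    apply tendsto_integral_filter_of_dominated_convergence
      (fun u => (1 + 2 ^ a) * (Real.exp (-u) * u ^ a))
    · filter_upwards with t
      exact (((measurable_id.pow_const a).mul
        ((measurable_const.sub (measurable_id.div_const t)).pow_const a)).mul
        (measurable_id.neg.exp)).indicator measurableSet_Ioc |>.aestronglyMeasurable
    · filter_upwards [eventually_gt_atTop (0:ℝ)] with t ht
      rw [hν, ae_restrict_iff' measurableSet_Ioi]
      filter_upwards with u hu
      rcases em (u ∈ Ioc (0:ℝ) t) with hmem | hmem
      · rw [hF]; simp only [indicator_of_mem hmem]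
        obtain ⟨hu0, hut⟩ := hmem
        have h1 : (1:ℝ) ≤ 2 - u / t := by
          have : u / t ≤ 1 := (div_le_one ht).2 hut
          linarith
        have h2 : (2:ℝ) - u / t ≤ 2 := by
          have : 0 < u / t := div_pos hu0 ht
          linarith
        have hb : (2 - u / t) ^ a ≤ 1 + 2 ^ a := rpow_le_aux h1 h2
        have hua : (0:ℝ) ≤ u ^ a := Real.rpow_nonneg hu0.le a
        have hmid : (0:ℝ) ≤ (2 - u/t) ^ a := Real.rpow_nonneg (by linarith) a
        rw [Real.norm_eq_abs, abs_of_nonneg (by positivity)]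
        calc u ^ a * (2 - u / t) ^ a * Real.exp (-u)
            ≤ u ^ a * (1 + 2 ^ a) * Real.exp (-u) := by
              apply mul_le_mul_of_nonneg_right _ (Real.exp_nonneg _)
              exact mul_le_mul_of_nonneg_left hb hua
          _ = (1 + 2 ^ a) * (Real.exp (-u) * u ^ a) := by ring
      · rw [hF]; simp only [indicator_of_notMem hmem, norm_zero]
        have : (0:ℝ) < 1 + 2 ^ a := by positivity
        have := Real.rpow_nonneg (le_of_lt hu) a
        positivity
    · exact hbound_int
    · rw [hν, ae_restrict_iff' measurableSet_Ioi]
      filter_upwards with u hu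
      have hu0 : (0:ℝ) < u := hu
      apply Tendsto.congr' (f₁ := fun t => u ^ a * (2 - u / t) ^ a * Real.exp (-u))
      · filter_upwards [eventually_ge_atTop u] with t htu
        simp only [hF]
        exact (indicator_of_mem (show u ∈ Ioc (0:ℝ) t from ⟨hu0, htu⟩)
          (fun u => u ^ a * (2 - u / t) ^ a * Real.exp (-u))).symm
      · have hdiv : Tendsto (fun t : ℝ => u / t) atTop (𝓝 0) :=
          tendsto_const_nhds.div_atTop tendsto_id
        have h2 : Tendsto (fun t : ℝ => 2 - u / t) atTop (𝓝 2) := by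
          simpa using tendsto_const_nhds.sub hdiv
        have hcont : ContinuousAt (fun x : ℝ => x ^ a) 2 :=
          Real.continuousAt_rpow_const 2 a (Or.inl two_ne_zero)
        have h3 : Tendsto (fun t : ℝ => (2 - u / t) ^ a) atTop (𝓝 (2 ^ a)) :=
          (hcont.tendsto.comp h2)
        have := (tendsto_const_nhds (x := u ^ a)).mul h3 |>.mul
          (tendsto_const_nhds (x := Real.exp (-u)))
        convert this using 2
        ring
  have hval : (∫ u, 2 ^ a * (Real.exp (-u) * u ^ a) ∂ν) = 2 ^ a * Real.Gamma (a + 1) := by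
    rw [MeasureTheory.integral_const_mul]
    congr 1
    rw [Real.Gamma_eq_integral ha1]
    simp [hν]
  rw [hval] at key
  apply key.congr'
  filter_upwards [eventually_ge_atTop (0:ℝ)] with t ht
  rw [hF, hν]
  rw [integral_indicator measurableSet_Ioc, Measure.restrict_restrict measurableSet_Ioc,
    Ioc_inter_Ioi, sup_of_le_left le_rfl]
  rw [intervalIntegral.integral_of_le ht]

/-- integrability of `(2 - u/t)^a` on `[t, 2t]`. -/
lemma tail_rpow_integrable {a t : ℝ} (ha : -1 < a) (ht : 0 < t) :
    IntervalIntegrable (fun u : ℝ => (2 - u / t) ^ a) volume t (2 * t) := by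
  have h1 : IntervalIntegrable (fun v : ℝ => (2 - v) ^ a) volume 1 2 := by
    have h := ((intervalIntegral.intervalIntegrable_rpow' ha (a := 0) (b := 1)).comp_sub_left 2).symm
    norm_num at h
    exact h
  have h2 := h1.comp_mul_right (c := t⁻¹)
  have ht' : t⁻¹ ≠ 0 := inv_ne_zero ht.ne'
  have e1 : (1:ℝ) / t⁻¹ = t := by field_simp
  have e2 : (2:ℝ) / t⁻¹ = 2 * t := by field_simp
  rw [e1, e2] at h2
  simpa [div_eq_mul_inv] using h2

/-- value of `∫_t^{2t} (2-u/t)^a du = t/(a+1)`. -/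
lemma tail_rpow_integral {a t : ℝ} (ha : -1 < a) (ht : 0 < t) :
    (∫ u in t..(2*t), (2 - u / t) ^ a) = t * (1 / (a + 1)) := by
  have ht0 : t ≠ 0 := ht.ne'
  rw [intervalIntegral.integral_comp_div (f := fun v => (2 - v) ^ a) ht0]
  rw [show t / t = (1:ℝ) by field_simp, show 2 * t / t = (2:ℝ) by field_simp]
  rw [intervalIntegral.integral_comp_sub_left (fun v => v ^ a) 2]
  norm_num
  rw [integral_rpow (Or.inl ha)]
  rw [Real.one_rpow, Real.zero_rpow (by linarith : a + 1 ≠ 0)]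
  simp [smul_eq_mul]

/-- Part 2: the tail `∫_t^{2t} u^a (2-u/t)^a e^{-u} du → 0`. -/
lemma tendsto_P2 {a : ℝ} (ha : -1 < a) :
    Tendsto (fun t : ℝ => ∫ u in t..(2*t), u ^ a * (2 - u / t) ^ a * Real.exp (-u)) atTop
      (𝓝 0) := by
  have hg : Tendsto (fun t : ℝ => ((1 + 2^a) * (1/(a+1))) * (t ^ (a+1) * Real.exp (-t)))
      atTop (𝓝 0) := by
    have := (tendsto_rpow_mul_exp_neg_mul_atTop_nhds_zero (a+1) 1 one_pos).const_mul
      ((1 + 2^a) * (1/(a+1)))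
    simpa using this
  apply squeeze_zero_norm' _ hg
  filter_upwards [eventually_gt_atTop (0:ℝ)] with t ht
  have ht2 : t ≤ 2 * t := by linarith
  have step1 : ‖∫ u in t..(2*t), u ^ a * (2 - u / t) ^ a * Real.exp (-u)‖
      ≤ ∫ u in t..(2*t), |u ^ a * (2 - u / t) ^ a * Real.exp (-u)| := by
    rw [Real.norm_eq_abs]
    exact intervalIntegral.abs_integral_le_integral_abs ht2
  have hconst : (0:ℝ) ≤ (1 + 2^a) * (t ^ a * Real.exp (-t)) := by positivity
  have step2 : (∫ u in t..(2*t), |u ^ a * (2 - u / t) ^ a * Real.exp (-u)|)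
      ≤ ∫ u in t..(2*t), ((1 + 2^a) * (t ^ a * Real.exp (-t))) * (2 - u / t) ^ a := by
    apply intervalIntegral.integral_mono_on ht2
    · -- integrability of the abs integrand
      apply IntervalIntegrable.abs
      have hcont : ContinuousOn (fun u : ℝ => u ^ a * Real.exp (-u)) (Set.uIcc t (2*t)) := by
        apply ContinuousOn.mul _ (Continuous.continuousOn (by fun_prop))
        apply ContinuousOn.rpow_const (by fun_prop)
        intro x hx
        rw [Set.uIcc_of_le ht2, mem_Icc] at hx
        exact Or.inl (by intro h; rw [h] at hx; linarith [hx.1])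
      have := (tail_rpow_integrable ha ht).mul_continuousOn hcont
      apply this.congr
      · intro u _; dsimp only; ring
    · exact (tail_rpow_integrable ha ht).const_mul _
    · intro u hu
      rw [mem_Icc] at hu
      obtain ⟨hu1, hu2⟩ := hu
      have hu0 : 0 < u := lt_of_lt_of_le ht hu1
      have hw1 : (0:ℝ) ≤ 2 - u / t := by
        have : u / t ≤ 2 := (div_le_iff₀ ht).2 (by linarith)
        linarith
      have habs : |u ^ a * (2 - u / t) ^ a * Real.exp (-u)|
          = u ^ a * (2 - u / t) ^ a * Real.exp (-u) := by
        have h1 := Real.rpow_nonneg hu0.le a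
        have h2 := Real.rpow_nonneg hw1 a
        exact abs_of_nonneg (by positivity)
      rw [habs]
      have hua : u ^ a ≤ (1 + 2^a) * t ^ a := by
        have : u ^ a = t ^ a * (u/t) ^ a := by
          rw [← Real.mul_rpow ht.le (by positivity)]
          congr 1; field_simp
        rw [this]
        have h12 : (1:ℝ) ≤ u / t := (one_le_div ht).2 hu1
        have h22 : u / t ≤ 2 := (div_le_iff₀ ht).2 (by linarith)
        have := rpow_le_aux (a := a) h12 h22
        have hta : (0:ℝ) ≤ t ^ a := Real.rpow_nonneg ht.le a
        nlinarith
      have hexp : Real.exp (-u) ≤ Real.exp (-t) := Real.exp_le_exp.2 (by linarith)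
      have hwa : (0:ℝ) ≤ (2 - u / t) ^ a := Real.rpow_nonneg hw1 a
      have hta : (0:ℝ) ≤ t ^ a := Real.rpow_nonneg ht.le a
      have hexp0 : (0:ℝ) ≤ Real.exp (-u) := (Real.exp_pos _).le
      have hua0 : (0:ℝ) ≤ u ^ a := Real.rpow_nonneg hu0.le a
      calc u ^ a * (2 - u / t) ^ a * Real.exp (-u)
          ≤ ((1 + 2^a) * t ^ a) * (2 - u / t) ^ a * Real.exp (-u) := by
            apply mul_le_mul_of_nonneg_right _ hexp0
            exact mul_le_mul_of_nonneg_right hua hwa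
        _ ≤ ((1 + 2^a) * t ^ a) * (2 - u / t) ^ a * Real.exp (-t) := by
            apply mul_le_mul_of_nonneg_left hexp
            positivity
        _ = ((1 + 2^a) * (t ^ a * Real.exp (-t))) * (2 - u / t) ^ a := by ring
  have step3 : (∫ u in t..(2*t), ((1 + 2^a) * (t ^ a * Real.exp (-t))) * (2 - u / t) ^ a)
      = ((1 + 2^a) * (1/(a+1))) * (t ^ (a+1) * Real.exp (-t)) := by
    rw [intervalIntegral.integral_const_mul, tail_rpow_integral ha ht]
    rw [Real.rpow_add_one ht.ne' a]
    ring
  rw [step3] at step2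
  exact le_trans step1 step2

/-- integrability of the head integrand on `[0,t]`. -/
lemma head_integrable {a t : ℝ} (ha : -1 < a) (ht : 0 < t) :
    IntervalIntegrable (fun u : ℝ => u ^ a * (2 - u / t) ^ a * Real.exp (-u)) volume 0 t := by
  have h1 : IntervalIntegrable (fun u : ℝ => u ^ a) volume 0 t :=
    intervalIntegral.intervalIntegrable_rpow' ha
  have hcont : ContinuousOn (fun u : ℝ => (2 - u / t) ^ a * Real.exp (-u)) (Set.uIcc 0 t) := by
    apply ContinuousOn.mul _ (Continuous.continuousOn (by fun_prop))
    apply ContinuousOn.rpow_const (by fun_prop)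
    intro x hx
    rw [Set.uIcc_of_le ht.le, mem_Icc] at hx
    left
    have : x / t ≤ 1 := (div_le_one ht).2 hx.2
    intro h; linarith
  have := h1.mul_continuousOn hcont
  apply this.congr
  intro u _; dsimp only; ring

/-- integrability of the tail integrand on `[t,2t]`. -/
lemma tail_integrable {a t : ℝ} (ha : -1 < a) (ht : 0 < t) :
    IntervalIntegrable (fun u : ℝ => u ^ a * (2 - u / t) ^ a * Real.exp (-u)) volume t (2*t) := by
  have hcont : ContinuousOn (fun u : ℝ => u ^ a * Real.exp (-u)) (Set.uIcc t (2*t)) := by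
    apply ContinuousOn.mul _ (Continuous.continuousOn (by fun_prop))
    apply ContinuousOn.rpow_const (by fun_prop)
    intro x hx
    rw [Set.uIcc_of_le (by linarith), mem_Icc] at hx
    exact Or.inl (by intro h; rw [h] at hx; linarith [hx.1])
  have := (tail_rpow_integrable ha ht).mul_continuousOn hcont
  apply this.congr
  intro u _; dsimp only; ring

/-- Laplace-type limit for the main term. -/
lemma mainlim {a : ℝ} (ha : -1 < a) :
    Tendsto (fun t : ℝ => t ^ (a+1) * ∫ s in (-1:ℝ)..1,
        (1-s) ^ a * (1+s) ^ a * Real.exp ((s-1)*t))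
      atTop (𝓝 (2 ^ a * Real.Gamma (a+1))) := by
  have hsum := (tendsto_P1 ha).add (tendsto_P2 ha)
  rw [add_zero] at hsum
  apply hsum.congr'
  filter_upwards [eventually_gt_atTop (0:ℝ)] with t ht
  have ht0 : t ≠ 0 := ht.ne'
  -- glue the two pieces
  have hglue : (∫ u in (0:ℝ)..t, u ^ a * (2 - u / t) ^ a * Real.exp (-u))
      + (∫ u in t..(2*t), u ^ a * (2 - u / t) ^ a * Real.exp (-u))
      = ∫ u in (0:ℝ)..(2*t), u ^ a * (2 - u / t) ^ a * Real.exp (-u) :=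
    intervalIntegral.integral_add_adjacent_intervals (head_integrable ha ht)
      (tail_integrable ha ht)
  rw [hglue]
  -- substitution
  have step1 : (∫ s in (-1:ℝ)..1, (1-s) ^ a * (1+s) ^ a * Real.exp ((s-1)*t))
      = ∫ v in (0:ℝ)..2, v ^ a * (2 - v) ^ a * Real.exp (-(v*t)) := by
    have : (fun s : ℝ => (1-s) ^ a * (1+s) ^ a * Real.exp ((s-1)*t))
        = fun s : ℝ => (fun v => v ^ a * (2 - v) ^ a * Real.exp (-(v*t))) (1 - s) := by
      funext s
      simp only []
      rw [show (2 - (1 - s)) = 1 + s by ring, show (-((1-s)*t)) = (s-1)*t by ring]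
    rw [this, intervalIntegral.integral_comp_sub_left (fun v => v ^ a * (2 - v) ^ a * Real.exp (-(v * t))) 1]
    norm_num
  have step2 : (∫ v in (0:ℝ)..2, v ^ a * (2 - v) ^ a * Real.exp (-(v*t)))
      = t^(-a:ℝ) * ∫ v in (0:ℝ)..2,
          (fun u => u ^ a * (2 - u / t) ^ a * Real.exp (-u)) (t * v) := by
    rw [← intervalIntegral.integral_const_mul]
    apply intervalIntegral.integral_congr
    intro v hv
    rw [Set.uIcc_of_le (by norm_num : (0:ℝ) ≤ 2), mem_Icc] at hv
    simp only []
    rw [show t * v / t = v by field_simp]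
    rw [Real.mul_rpow ht.le hv.1]
    rw [Real.rpow_neg ht.le]
    have hta : (0:ℝ) < t ^ a := Real.rpow_pos_of_pos ht a
    field_simp
  have step3 : (∫ v in (0:ℝ)..2,
        (fun u => u ^ a * (2 - u / t) ^ a * Real.exp (-u)) (t * v))
      = t⁻¹ * ∫ u in (0:ℝ)..(2*t), u ^ a * (2 - u / t) ^ a * Real.exp (-u) := by
    rw [intervalIntegral.integral_comp_mul_left (fun u => u ^ a * (2 - u / t) ^ a * Real.exp (-u)) ht0]
    rw [mul_zero, mul_comm t 2]
    simp [smul_eq_mul]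
  rw [step1, step2, step3]
  rw [show t ^ (a+1) * (t ^ (-a:ℝ) * (t⁻¹ * ∫ u in (0:ℝ)..(2*t),
      u ^ a * (2 - u / t) ^ a * Real.exp (-u)))
    = (t ^ (a+1) * t ^ (-a:ℝ) * t⁻¹) * ∫ u in (0:ℝ)..(2*t),
      u ^ a * (2 - u / t) ^ a * Real.exp (-u) by ring]
  have : t ^ (a+1) * t ^ (-a:ℝ) * t⁻¹ = 1 := by
    rw [← Real.rpow_add ht, show a + 1 + -a = (1:ℝ) by ring, Real.rpow_one]
    field_simp
  rw [this, one_mul]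

lemma MemF.monotone {f : ℝ → ℝ} (hf : MemF f) : Monotone f := by
  intro x y hxy
  rcases le_total y 0 with hy | hy
  · exact hf.monoNonpos (by simp only [mem_Iic]; linarith) (by simpa using hy) hxy
  · rcases le_total x 0 with hx | hx
    · calc f x ≤ f 0 := hf.monoNonpos (by simpa using hx) (by simp) hx
        _ ≤ f y := (hf.strictMonoNonneg.monotoneOn) (by simp) (by simpa using hy) hy
    · exact (hf.strictMonoNonneg.monotoneOn) (by simpa using hx) (by simpa using hy) hxy

/-- integrability of `β(s) * g(s)` for `g` measurable with `|g| ≤ 1` on `(-1,1]`. -/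
lemma beta_mul_integrable {a b : ℝ} (ha : -1 < a) (hb : -1 < b) {g : ℝ → ℝ}
    (hgm : Measurable g) (hgb : ∀ s ∈ Ioc (-1:ℝ) 1, |g s| ≤ 1) :
    IntervalIntegrable (fun s => (1 - s) ^ a * (1 + s) ^ b * g s) volume (-1) 1 := by
  rw [intervalIntegrable_iff_integrableOn_Ioc_of_le (by norm_num)]
  have hβ : IntegrableOn (fun s : ℝ => (1 - s) ^ a * (1 + s) ^ b) (Ioc (-1) 1) := by
    rw [← intervalIntegrable_iff_integrableOn_Ioc_of_le (by norm_num)]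
    exact beta_intervalIntegrable ha hb
  apply Integrable.mono' hβ
  · apply Measurable.aestronglyMeasurable
    exact (((measurable_const.sub measurable_id).pow_const a).mul
      ((measurable_const.add measurable_id).pow_const b)).mul hgm
  · rw [ae_restrict_iff' measurableSet_Ioc]
    filter_upwards with s hs
    obtain ⟨hs1, hs2⟩ := hs
    have h1 : (0:ℝ) ≤ 1 - s := by linarith
    have h2 : (0:ℝ) ≤ 1 + s := by linarith
    have hb1 := Real.rpow_nonneg h1 a
    have hb2 := Real.rpow_nonneg h2 b
    rw [Real.norm_eq_abs, abs_mul, abs_of_nonneg (by positivity : (0:ℝ) ≤ (1-s)^a * (1+s)^b)]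
    calc (1-s)^a * (1+s)^b * |g s| ≤ (1-s)^a * (1+s)^b * 1 :=
          mul_le_mul_of_nonneg_left (hgb s ⟨hs1, hs2⟩) (by positivity)
      _ = (1-s)^a * (1+s)^b := mul_one _

/-- Lemma A.4(i): `(κ_n φ_f(κ_n))^{(p-1)/2} · (1/f(κ_n)) · ∫_{-1}^1 (1-s²)^{(p-3)/2} f(κ_n s) ds
tends to `2^{(p-3)/2} Γ((p-1)/2)`. -/
theorem normalizing_constant_expansion
    (p : ℕ) (hp : 2 ≤ p) (f : ℝ → ℝ) (hf : MemF f)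
    (κ : ℕ → ℝ) (hκpos : ∀ n, 0 < κ n) (hκtop : Tendsto κ atTop atTop) :
    Tendsto (fun n => (κ n * phiF f (κ n)) ^ (((p:ℝ) - 1) / 2) * (1 / f (κ n)) * I0 p f (κ n))
      atTop (nhds ((2:ℝ) ^ (((p:ℝ) - 3) / 2) * Real.Gamma (((p:ℝ) - 1) / 2))) := by
  set a : ℝ := ((p:ℝ) - 3) / 2 with hadef
  have hp2 : (2:ℝ) ≤ (p:ℝ) := by exact_mod_cast hp
  have ha : -1 < a := by rw [hadef]; linarith
  have hA : ((p:ℝ) - 1) / 2 = a + 1 := by rw [hadef]; ring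
  set t : ℕ → ℝ := fun n => κ n * phiF f (κ n) with htdef
  have ht : Tendsto t atTop atTop := hf.tendsto_top.comp hκtop
  -- main term
  set Main : ℕ → ℝ := fun n => t n ^ (a+1) * ∫ s in (-1:ℝ)..1,
      (1-s) ^ a * (1+s) ^ a * Real.exp ((s-1) * t n) with hMaindef
  have hMain : Tendsto Main atTop (𝓝 (2 ^ a * Real.Gamma (a+1))) := (mainlim ha).comp ht
  -- full quantity
  set Q : ℕ → ℝ := fun n => t n ^ (a+1) * (1 / f (κ n)) * I0 p f (κ n) with hQdef
  -- error control
  set E : ℕ → ℝ := fun n => ∫ s in (-1:ℝ)..1, (1 - s) ^ a * (1 + s) ^ a *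
      |f (κ n * s) / f (κ n) - Real.exp ((s - 1) * t n)| with hEdef
  have hEo : (fun n => E n) =o[atTop] (fun n => (t n) ^ (-(a+1))) :=
    (hf.littleO a a ha ha).comp_tendsto hκtop
  have htE : Tendsto (fun n => t n ^ (a+1) * E n) atTop (𝓝 0) := by
    rw [← isLittleO_one_iff ℝ]
    have h1 : (fun n => t n ^ (a+1) * E n) =o[atTop]
        (fun n => t n ^ (a+1) * t n ^ (-(a+1))) :=
      (isBigO_refl (fun n => t n ^ (a+1)) atTop).mul_isLittleO hEo
    apply h1.trans_eventuallyEq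
    filter_upwards [ht.eventually (eventually_gt_atTop 0)] with n htn
    rw [← Real.rpow_add htn, add_neg_cancel, Real.rpow_zero]
  -- |Q - Main| ≤ t^{a+1} E eventually
  have hbound : ∀ᶠ n in atTop, ‖Q n - Main n‖ ≤ t n ^ (a+1) * E n := by
    filter_upwards [ht.eventually (eventually_gt_atTop 0)] with n htn
    have hκn := hκpos n
    have hfκ : 0 < f (κ n) := hf.pos (κ n)
    -- rewrite Q as an integral of β r
    have hQint : (1 / f (κ n)) * I0 p f (κ n)
        = ∫ s in (-1:ℝ)..1, (1-s)^a * (1+s)^a * (f (κ n * s) / f (κ n)) := by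
      rw [I0, ← intervalIntegral.integral_const_mul]
      apply intervalIntegral.integral_congr
      intro s hs
      rw [Set.uIcc_of_le (by norm_num : (-1:ℝ) ≤ 1), mem_Icc] at hs
      have h1 : (0:ℝ) ≤ 1 - s := by linarith [hs.2]
      have h2 : (0:ℝ) ≤ 1 + s := by linarith [hs.1]
      beta_reduce
      rw [show (1 - s^2 : ℝ) = (1-s)*(1+s) by ring, Real.mul_rpow h1 h2]
      field_simp
      rw [hadef]; ring
    -- integrability of the two integrands
    have hIg : IntervalIntegrable (fun s => (1-s)^a * (1+s)^a * Real.exp ((s-1) * t n))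
        volume (-1) 1 := by
      apply (beta_intervalIntegrable ha ha).mul_continuousOn
      exact Continuous.continuousOn (by fun_prop)
    have hIr : IntervalIntegrable (fun s => (1-s)^a * (1+s)^a * (f (κ n * s) / f (κ n)))
        volume (-1) 1 := by
      apply beta_mul_integrable ha ha
      · exact (hf.monotone.measurable.comp (measurable_id.const_mul (κ n))).div_const _
      · intro s hs
        obtain ⟨hs1, hs2⟩ := hs
        have hnum : 0 < f (κ n * s) := hf.pos _
        have hle : f (κ n * s) ≤ f (κ n) := by
          apply hf.monotone
          nlinarith
        rw [abs_of_nonneg (by positivity)]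
        exact (div_le_one hfκ).2 hle
    have hsub : Q n - Main n = t n ^ (a+1) * ∫ s in (-1:ℝ)..1,
        ((1-s)^a * (1+s)^a * (f (κ n * s) / f (κ n))
          - (1-s)^a * (1+s)^a * Real.exp ((s-1) * t n)) := by
      rw [intervalIntegral.integral_sub hIr hIg, hQdef, hMaindef]
      simp only []
      rw [mul_assoc, hQint]
      ring
    rw [hsub, norm_mul, Real.norm_eq_abs, Real.norm_eq_abs,
      abs_of_nonneg (Real.rpow_nonneg (le_of_lt htn) _)]
    apply mul_le_mul_of_nonneg_left _ (Real.rpow_nonneg (le_of_lt htn) _)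
    calc |∫ s in (-1:ℝ)..1, ((1-s)^a * (1+s)^a * (f (κ n * s) / f (κ n))
          - (1-s)^a * (1+s)^a * Real.exp ((s-1) * t n))|
        ≤ ∫ s in (-1:ℝ)..1, |(1-s)^a * (1+s)^a * (f (κ n * s) / f (κ n))
          - (1-s)^a * (1+s)^a * Real.exp ((s-1) * t n)| :=
          intervalIntegral.abs_integral_le_integral_abs (by norm_num)
      _ = E n := by
          rw [hEdef]
          apply intervalIntegral.integral_congr
          intro s hs
          rw [Set.uIcc_of_le (by norm_num : (-1:ℝ) ≤ 1), mem_Icc] at hs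
          have h1 : (0:ℝ) ≤ 1 - s := by linarith [hs.2]
          have h2 : (0:ℝ) ≤ 1 + s := by linarith [hs.1]
          beta_reduce
          rw [show (1-s)^a * (1+s)^a * (f (κ n * s) / f (κ n))
              - (1-s)^a * (1+s)^a * Real.exp ((s-1) * t n)
            = (1-s)^a * (1+s)^a * (f (κ n * s) / f (κ n) - Real.exp ((s-1) * t n)) by ring]
          rw [abs_mul, abs_of_nonneg (by positivity : (0:ℝ) ≤ (1-s)^a * (1+s)^a)]
  have hErr : Tendsto (fun n => Q n - Main n) atTop (𝓝 0) :=
    squeeze_zero_norm' hbound htE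
  have hfinal : Tendsto Q atTop (𝓝 (2 ^ a * Real.Gamma (a+1))) := by
    have := hMain.add hErr
    rw [add_zero] at this
    apply this.congr
    intro n; ring
  rw [hA]
  exact hfinal
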